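/- In a 2-cut STT, every node has at most one child that is an indirect separator node. -/

import Mathlib

open SimpleGraph

variable {V : Type*}

/-- Reachability within a vertex set `S`. -/
def reachIn (G : SimpleGraph V) (S : Set V) : V → V → Prop :=
  Relation.ReflTransGen (fun x y => x ∈ S ∧ y ∈ S ∧ G.Adj x y)

/-- The connected component of `v` inside the vertex set `S`. -/
def compIn (G : SimpleGraph V) (S : Set V) (v : V) : Set V :=
  {u | reachIn G S v u}

/-- `IsSearchTree G par S r`: the parent map `par` describes a search tree with root `r`
on the part of `G` induced by `S`, built recursively: the root `r` is chosen, and each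
connected component of `S \ {r}` carries a search tree whose root is a child of `r`. -/
inductive IsSearchTree (G : SimpleGraph V) (par : V → Option V) : Set V → V → Prop where
  | node (S : Set V) (r : V) (ρ : V → V) (hr : r ∈ S)
      (hρ : ∀ v ∈ S, v ≠ r → par (ρ v) = some r)
      (h : ∀ v ∈ S, v ≠ r → IsSearchTree G par (compIn G (S \ {r}) v) (ρ v)) :
      IsSearchTree G par S r

/-- `isAnc par a v`: `a` is an ancestor of `v` (reflexively). -/
def isAnc (par : V → Option V) (a v : V) : Prop :=
  Relation.ReflTransGen (fun x y => par x = some y) v a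

/-- The subtree rooted at `v`: all descendants of `v` (including `v`). -/
def subtree (par : V → Option V) (v : V) : Set V := {u | isAnc par v u}

/-- The outer boundary `∂(T_v)` of the subtree rooted at `v`. -/
def bdry (G : SimpleGraph V) (par : V → Option V) (v : V) : Set V :=
  {x | x ∉ subtree par v ∧ ∃ u ∈ subtree par v, G.Adj x u}

/-- A search tree is 2-cut if every subtree boundary has size at most 2. -/
def TwoCut (G : SimpleGraph V) (par : V → Option V) : Prop :=
  ∀ v, (bdry G par v).ncard ≤ 2

open Classical in
/-- The STT rotation of `v` with its parent `p`: `p` becomes a child of `v`, `v` takes the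
former parent of `p`, and any child `c` of `v` with `p ∈ ∂(T_c)` is reattached to `p`. -/
noncomputable def rotate (G : SimpleGraph V) (par : V → Option V) (v p : V) :
    V → Option V := fun x =>
  if x = v then par p
  else if x = p then some v
  else if par x = some v ∧ p ∈ bdry G par x then some p
  else par x

/-- A splay step at `x`: a single rotation if `x` has no grandparent; a ZIG-ZAG
(two rotations at `x`) if `x` is a separator; a ZIG-ZIG (rotation at the parent,
then at `x`) otherwise. -/
noncomputable def splayStep (G : SimpleGraph V) (par : V → Option V) (x : V) :
    V → Option V :=
  match par x with
  | none => par
  | some p =>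
    match par p with
    | none => rotate G par x p
    | some g =>
      if (bdry G par x).ncard = 2 then
        rotate G (rotate G par x p) x g
      else
        rotate G (rotate G par p g) x p

/-
The parent `g` of `p` lies in `∂(T_p)`, and so does the second boundary vertex `x` of an
indirect separator child `c`. Two such children `c ≠ c'` would give distinct vertices
`g, x, x'` of `∂(T_p)`: `x = x'` is impossible because `x` would then be adjacent both to
`T_c` and to `T_{c'}`, which are joined by a path inside `T_p`, closing a cycle in the tree `G`.
-/

lemma Set.exists_eq_pair_of_ncard_eq_two {α : Type*} {s : Set α} {p : α} (h : s.ncard = 2)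
    (hp : p ∈ s) : ∃ x, x ≠ p ∧ s = {p, x} := by
  obtain ⟨a, b, hab, rfl⟩ := Set.ncard_eq_two.mp h
  rcases hp with rfl | rfl
  · exact ⟨b, hab.symm, rfl⟩
  · exact ⟨a, hab, Set.pair_comm a p⟩

lemma SimpleGraph.IsAcyclic.eq_of_walk_of_notMem_support {G : SimpleGraph V} (hG : G.IsAcyclic)
    {u u' x : V} (hu : G.Adj u x) (hu' : G.Adj x u') (w : G.Walk u u')
    (hx : x ∉ w.support) : u = u' := by
  classical
  by_contra hne
  have hpath : (Walk.cons hu (Walk.cons hu' Walk.nil)).IsPath := by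
    simp [hu.ne, hu'.ne, hne]
  have huniq := (hG.subsingleton_path u u').elim w.toPath ⟨_, hpath⟩
  exact hx (w.support_toPath_subset_support (by rw [huniq]; simp))

section SearchTree

variable {G : SimpleGraph V} {par : V → Option V}

lemma reachIn.symm {S : Set V} {x y : V} (h : reachIn G S x y) : reachIn G S y x := by
  induction h with
  | refl => exact .refl
  | tail _ hyz ih => exact .head ⟨hyz.2.1, hyz.1, hyz.2.2.symm⟩ ih

lemma reachIn.trans {S : Set V} {x y z : V} (h : reachIn G S x y) (h' : reachIn G S y z) :
    reachIn G S x z :=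
  Relation.ReflTransGen.trans h h'

lemma reachIn.exists_walk {S : Set V} {x y : V} (hx : x ∈ S) (h : reachIn G S x y) :
    ∃ w : G.Walk x y, ∀ v ∈ w.support, v ∈ S := by
  induction h with
  | refl => exact ⟨.nil, by simpa using hx⟩
  | tail _ hyz ih =>
    obtain ⟨w, hw⟩ := ih
    refine ⟨w.concat hyz.2.2, fun v hv => ?_⟩
    rw [Walk.support_concat, List.mem_append, List.mem_singleton] at hv
    rcases hv with hv | rfl
    · exact hw v hv
    · exact hyz.2.1

lemma reachIn_univ_of_reachable {x y : V} (h : G.Reachable x y) : reachIn G Set.univ x y := by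
  obtain ⟨w⟩ := h
  induction w with
  | nil => exact .refl
  | cons hadj _ ih => exact .head ⟨trivial, trivial, hadj⟩ ih

lemma mem_compIn_self (S : Set V) (v : V) : v ∈ compIn G S v :=
  .refl

lemma compIn_subset {S : Set V} {v : V} (hv : v ∈ S) : compIn G S v ⊆ S := by
  intro u hu
  induction hu with
  | refl => exact hv
  | tail _ hyz => exact hyz.2.1

lemma mem_compIn_of_adj {S : Set V} {v u y : V} (hv : v ∈ S) (hu : u ∈ compIn G S v)
    (hy : y ∈ S) (hadj : G.Adj u y) : y ∈ compIn G S v :=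
  Relation.ReflTransGen.tail hu ⟨compIn_subset hv hu, hy, hadj⟩

lemma reachIn_compIn {S : Set V} {v x y : V} (hx : x ∈ compIn G S v) (hy : y ∈ compIn G S v) :
    reachIn G (compIn G S v) x y := by
  have hlift : ∀ {u}, reachIn G S v u → reachIn G (compIn G S v) v u := by
    intro u h
    induction h with
    | refl => exact .refl
    | tail hvy hyz ih => exact ih.tail ⟨hvy, hvy.tail hyz, hyz.2.2⟩
  exact (hlift hx).symm.trans (hlift hy)

lemma reachIn.mem_compIn_or_exists_adj {S : Set V} {p v y : V} (hv : v ∈ S \ {p})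
    (h : reachIn G S v y) :
    y ∈ compIn G (S \ {p}) v ∨ ∃ u ∈ compIn G (S \ {p}) v, G.Adj u p := by
  induction h with
  | refl => exact .inl (mem_compIn_self _ v)
  | @tail y z _ hyz ih =>
    rcases ih with hy | hexit
    · by_cases hzp : z = p
      · exact .inr ⟨y, hy, hzp ▸ hyz.2.2⟩
      · exact .inl (mem_compIn_of_adj hv hy ⟨hyz.2.1, hzp⟩ hyz.2.2)
    · exact .inr hexit

lemma mem_subtree_of_par_eq {c p : V} (hpar : par c = some p) : c ∈ subtree par p :=
  .single hpar

lemma par_mem_subtree {c v p : V} (hv : v ∈ subtree par c) (hvc : v ≠ c)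
    (hpar : par v = some p) : p ∈ subtree par c := by
  rcases Relation.ReflTransGen.cases_head hv with rfl | ⟨b, hvb, hbc⟩
  · exact absurd rfl hvc
  · rw [hpar, Option.some_inj] at hvb
    exact hvb ▸ hbc

namespace IsSearchTree

lemma subset_subtree {S : Set V} {r : V} (hT : IsSearchTree G par S r) : S ⊆ subtree par r := by
  induction hT with
  | node S r ρ _ hρ _ ih =>
    intro x hx
    by_cases hxr : x = r
    · exact hxr ▸ .refl
    · exact (ih x hx hxr (mem_compIn_self _ x)).tail (hρ x hx hxr)

lemma par_mem {S : Set V} {r : V} (hT : IsSearchTree G par S r) :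
    ∀ x ∈ S, x ≠ r → ∃ y ∈ S, par x = some y := by
  induction hT with
  | node S r ρ hr hρ _ ih =>
    intro x hx hxr
    by_cases hρx : x = ρ x
    · exact ⟨r, hr, hρx ▸ hρ x hx hxr⟩
    · obtain ⟨y, hy, hpar⟩ := ih x hx hxr x (mem_compIn_self _ x) hρx
      exact ⟨y, (compIn_subset (S := S \ {r}) ⟨hx, hxr⟩ hy).1, hpar⟩

lemma par_eq_root_or_mem_compIn {S : Set V} {r u : V} (hT : IsSearchTree G par S r) (hu : u ∈ S)
    (hur : u ≠ r) : par u = some r ∨ ∃ b ∈ compIn G (S \ {r}) u, par u = some b := by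
  cases hT with
  | node _ _ ρ _ hρ h =>
    by_cases hρu : u = ρ u
    · exact .inl (hρu ▸ hρ u hu hur)
    · exact .inr ((h u hu hur).par_mem u (mem_compIn_self _ u) hρu)

lemma of_par_eq {S : Set V} {r c : V} (hT : IsSearchTree G par S r) (hc : c ∈ S) (hcr : c ≠ r)
    (hpar : par c = some r) : IsSearchTree G par (compIn G (S \ {r}) c) c := by
  cases hT with
  | node _ _ ρ _ _ h =>
    have hρc : ρ c = c := by
      by_contra hne
      obtain ⟨y, hy, hpy⟩ := (h c hc hcr).par_mem c (mem_compIn_self _ c) (Ne.symm hne)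
      rw [hpar, Option.some_inj] at hpy
      exact (compIn_subset (S := S \ {r}) ⟨hc, hcr⟩ hy).2 hpy.symm
    simpa only [hρc] using h c hc hcr

end IsSearchTree

structure IsSearchSubtree (G : SimpleGraph V) (par : V → Option V) (r : V) : Prop where
  isSearchTree : IsSearchTree G par (subtree par r) r
  par_notMem : ∀ b, par r = some b → b ∉ subtree par r
  reachIn_of_mem : ∀ x ∈ subtree par r, ∀ y ∈ subtree par r, reachIn G (subtree par r) x y

namespace IsSearchSubtree

variable {p c : V}

lemma mem_subtree_diff_of_par_eq (h : IsSearchSubtree G par p) (hpar : par c = some p) :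
    c ∈ subtree par p \ {p} := by
  refine ⟨mem_subtree_of_par_eq hpar, ?_⟩
  rintro rfl
  exact h.par_notMem c hpar .refl

lemma subtree_eq_compIn (h : IsSearchSubtree G par p) (hpar : par c = some p) :
    subtree par c = compIn G (subtree par p \ {p}) c := by
  have hc := h.mem_subtree_diff_of_par_eq hpar
  refine subset_antisymm (fun u hu => ?_) (h.isSearchTree.of_par_eq hc.1 hc.2 hpar).subset_subtree
  induction hu using Relation.ReflTransGen.head_induction_on with
  | refl => exact mem_compIn_self _ c
  | @head u b hub _ hb =>
    have hbp := compIn_subset hc hb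
    have hup : u ≠ p := by
      rintro rfl
      exact h.par_notMem b hub hbp.1
    rcases h.isSearchTree.par_eq_root_or_mem_compIn (.head hub hbp.1) hup with
      hu | ⟨b', hb', hub'⟩
    · exact absurd (Option.some_inj.mp (hub.symm.trans hu)) hbp.2
    · rw [hub, Option.some_inj] at hub'
      exact hb.trans (hub' ▸ hb').symm

lemma notMem_subtree_child (h : IsSearchSubtree G par p) (hpar : par c = some p) :
    p ∉ subtree par c := by
  rw [h.subtree_eq_compIn hpar]
  exact fun hp => (compIn_subset (h.mem_subtree_diff_of_par_eq hpar) hp).2 rfl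

lemma child (h : IsSearchSubtree G par p) (hpar : par c = some p) : IsSearchSubtree G par c := by
  have hsub := h.subtree_eq_compIn hpar
  refine ⟨?_, fun b hb => ?_, ?_⟩
  · have hc := h.mem_subtree_diff_of_par_eq hpar
    rw [hsub]
    exact h.isSearchTree.of_par_eq hc.1 hc.2 hpar
  · rw [hpar, Option.some_inj] at hb
    exact hb ▸ h.notMem_subtree_child hpar
  · rw [hsub]
    exact fun x hx y hy => reachIn_compIn hx hy

lemma par_mem_bdry (h : IsSearchSubtree G par p) (hpar : par c = some p) : p ∈ bdry G par c := by
  have hc := h.mem_subtree_diff_of_par_eq hpar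
  refine ⟨h.notMem_subtree_child hpar, ?_⟩
  rcases (h.reachIn_of_mem c hc.1 p .refl).mem_compIn_or_exists_adj hc with hp | ⟨u, hu, hadj⟩
  · exact absurd rfl (compIn_subset hc hp).2
  · exact ⟨u, h.subtree_eq_compIn hpar ▸ hu, hadj.symm⟩

lemma mem_bdry_of_mem_bdry_child (h : IsSearchSubtree G par p) (hpar : par c = some p) {x : V}
    (hx : x ∈ bdry G par c) (hxp : x ≠ p) : x ∈ bdry G par p := by
  have hc := h.mem_subtree_diff_of_par_eq hpar
  obtain ⟨hxc, u, hu, hadj⟩ := hx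
  rw [h.subtree_eq_compIn hpar] at hxc hu
  refine ⟨fun hxp' => hxc (mem_compIn_of_adj hc hu ⟨hxp', hxp⟩ hadj.symm), u,
    (compIn_subset hc hu).1, hadj⟩

lemma eq_of_mem_bdry_of_mem_bdry (h : IsSearchSubtree G par p) (hG : G.IsAcyclic) {c' x : V}
    (hpar : par c = some p) (hpar' : par c' = some p) (hne : c ≠ c')
    (hx : x ∈ bdry G par c) (hx' : x ∈ bdry G par c') : x = p := by
  by_contra hxp
  have hxT : x ∉ subtree par p := (h.mem_bdry_of_mem_bdry_child hpar hx hxp).1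
  obtain ⟨-, u, hu, hux⟩ := hx
  obtain ⟨-, u', hu', hux'⟩ := hx'
  have hc := h.mem_subtree_diff_of_par_eq hpar
  have hc' := h.mem_subtree_diff_of_par_eq hpar'
  rw [h.subtree_eq_compIn hpar] at hu
  rw [h.subtree_eq_compIn hpar'] at hu'
  have huT := (compIn_subset hc hu).1
  obtain ⟨w, hw⟩ := (h.reachIn_of_mem u huT u' (compIn_subset hc' hu').1).exists_walk huT
  obtain rfl := hG.eq_of_walk_of_notMem_support hux.symm hux' w (fun hxw => hxT (hw x hxw))
  have hc'c : c' ∈ subtree par c := by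
    rw [h.subtree_eq_compIn hpar]
    exact hu.trans hu'.symm
  exact h.notMem_subtree_child hpar (par_mem_subtree hc'c (Ne.symm hne) hpar')

end IsSearchSubtree

lemma IsSearchTree.isSearchSubtree {r : V} (hT : IsSearchTree G par Set.univ r)
    (hG : G.Connected) (hroot : par r = none) (v : V) : IsSearchSubtree G par v := by
  have huniv : subtree par r = Set.univ := Set.eq_univ_of_univ_subset hT.subset_subtree
  have hr : IsSearchSubtree G par r := by
    refine ⟨huniv ▸ hT, fun b hb => by simp [hroot] at hb, ?_⟩
    rw [huniv]
    exact fun x _ y _ => reachIn_univ_of_reachable (hG.preconnected x y)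
  induction hT.subset_subtree (Set.mem_univ v) using Relation.ReflTransGen.head_induction_on with
  | refl => exact hr
  | head hpar _ ih => exact ih.child hpar

end SearchTree

/-- In a 2-cut STT, every node has at most one child that is an indirect
separator node (a separator child `c` with `∂(T_c)` not equal to `{p, g}`,
where `g` is the parent of `p`). -/
theorem at_most_one_indirect_separator_child [Fintype V] (G : SimpleGraph V)
    (hG : G.IsTree) (par : V → Option V) (r : V) (hroot : par r = none)
    (hT : IsSearchTree G par Set.univ r) (h2 : TwoCut G par)
    (p c c' : V) (hc : par c = some p) (hc' : par c' = some p)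
    (hsep : (bdry G par c).ncard = 2) (hsep' : (bdry G par c').ncard = 2)
    (hi : ∀ g, par p = some g → bdry G par c ≠ {p, g})
    (hi' : ∀ g, par p = some g → bdry G par c' ≠ {p, g}) :
    c = c' := by
  by_contra hne
  have hsub := hT.isSearchSubtree hG.connected hroot
  obtain ⟨x, hxp, hbc⟩ := Set.exists_eq_pair_of_ncard_eq_two hsep ((hsub p).par_mem_bdry hc)
  obtain ⟨x', hx'p, hbc'⟩ :=
    Set.exists_eq_pair_of_ncard_eq_two hsep' ((hsub p).par_mem_bdry hc')
  have hxc : x ∈ bdry G par c := by simp [hbc]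
  have hx'c' : x' ∈ bdry G par c' := by simp [hbc']
  have hx := (hsub p).mem_bdry_of_mem_bdry_child hc hxc hxp
  have hx' := (hsub p).mem_bdry_of_mem_bdry_child hc' hx'c' hx'p
  have hxx' : x ≠ x' := fun h =>
    hxp ((hsub p).eq_of_mem_bdry_of_mem_bdry hG.isAcyclic hc hc' hne hxc (h ▸ hx'c'))
  have hpr : p ≠ r := by
    rintro rfl
    exact hx.1 (hT.subset_subtree (Set.mem_univ x))
  obtain ⟨g, -, hg⟩ := hT.par_mem p (Set.mem_univ p) hpr
  have hgx : g ≠ x := fun h => hi g hg (by rw [hbc, h])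
  have hgx' : g ≠ x' := fun h => hi' g hg (by rw [hbc', h])
  have hthree : 2 < (bdry G par p).ncard := (Set.two_lt_ncard_iff (Set.toFinite _)).mpr
    ⟨g, x, x', (hsub g).par_mem_bdry hg, hx, hx', hgx, hgx', hxx'⟩
  exact absurd (h2 p) (not_le.mpr hthree)
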